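/- arXiv:1712.00357 — 2 statements merged into one kernel-verified Lean document; each statement's English description precedes it below -/
import Mathlib

section
/- Under hypothesis (H), for every x ∈ dom ∂f, the extended support esupp(x) = supp(x) ∪ {k : −(∇h(x))_k ∈ bd I_k} is a finite set. -/
/-!
Each summand `ψ_k + σ_{I_k}` of `g` vanishes at `0` and dominates `ω |t|`: `ψ_k ≥ 0` because it
is convex with `ψ_k(0) = ψ_k'(0) = 0`, and `σ_{I_k}(t) ≥ ω |t|` because `[-ω, ω] ⊆ I_k`.
Let `u ∈ ∂f(x)` and `x_k ≠ 0`. Testing the subgradient inequality at `y = x - x_k e_k`, which lowers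
`g` by at least `ω |x_k|`, and bounding `h(y) - h(x)` by the gradient inequality at `y` and the
Lipschitz continuity of `∇h`, gives `ω ≤ |(∇h x)_k| + L |x_k| + |u_k|`. The same bound holds when
`-(∇h x)_k ∈ bd I_k`, since then `|(∇h x)_k| ≥ ω`. The right-hand side tends to `0` because
`∇h x`, `x` and `u` lie in `ℓ²`, so only finitely many `k` satisfy it.
-/

open Filter Topology

open scoped RealInnerProductSpace NNReal ENNReal

theorem EReal.nonneg_of_convex_of_hasDerivAt_zero {ψ : ℝ → EReal}
    (hconv : ∀ s t a b : ℝ, 0 ≤ a → 0 ≤ b → a + b = 1 →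
      ψ (a * s + b * t) ≤ (a : EReal) * ψ s + (b : EReal) * ψ t)
    (h0 : ψ 0 = 0)
    (hdiff : ∃ (F : ℝ → ℝ) (ε : ℝ), 0 < ε ∧ (∀ t : ℝ, |t| < ε → ψ t = (F t : EReal)) ∧
      HasDerivAt F 0 0) (t : ℝ) : 0 ≤ ψ t := by
  obtain ⟨F, ε, hε, hFψ, hF⟩ := hdiff
  by_contra! hneg
  obtain ⟨r, hψr, hr⟩ := EReal.lt_iff_exists_real_btwn.1 hneg
  have hF0 : F 0 = 0 := by exact_mod_cast (hFψ 0 (by simpa using hε)).symm.trans h0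
  have hline : HasDerivAt (fun a => F (a * t)) 0 0 := by
    have := hF.comp_of_eq 0 (hasDerivAt_mul_const t) (zero_mul t).symm
    rwa [zero_mul] at this
  have hsmall : ∀ᶠ a in 𝓝[>] (0 : ℝ), 0 < a ∧ a < 1 ∧ |a * t| < ε := by
    refine eventually_nhdsWithin_of_forall (fun a ha => ha) |>.and
      (eventually_nhdsWithin_of_eventually_nhds ?_)
    refine (eventually_lt_nhds one_pos).and ?_
    have : Continuous fun a : ℝ => |a * t| := by fun_prop
    exact this.continuousAt.eventually_lt continuousAt_const (by simpa using hε)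
  have hslope : ∀ᶠ a in 𝓝[>] (0 : ℝ), a⁻¹ • (F ((0 + a) * t) - F (0 * t)) ≤ r := by
    filter_upwards [hsmall] with a ⟨ha0, ha1, hat⟩
    have hcv := hconv t 0 a (1 - a) ha0.le (by linarith) (by ring)
    rw [mul_zero, add_zero, h0, mul_zero, add_zero, hFψ _ hat] at hcv
    have : F (a * t) ≤ a * r := by
      exact_mod_cast hcv.trans (mul_le_mul_of_nonneg_left hψr.le (by exact_mod_cast ha0.le))
    rw [zero_add, zero_mul, hF0, sub_zero, smul_eq_mul, inv_mul_le_iff₀ ha0]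
    exact this
  have hr' : r < 0 := by exact_mod_cast hr
  exact hr'.not_ge (le_of_tendsto hline.tendsto_slope_zero_right hslope)

theorem ConvexOn.add_inner_le_of_hasGradientAt {E : Type*} [NormedAddCommGroup E]
    [InnerProductSpace ℝ E] [CompleteSpace E] {h : E → ℝ} (hconv : ConvexOn ℝ Set.univ h)
    {x p : E} (hp : HasGradientAt h p x) (y : E) : h x + ⟪p, y - x⟫ ≤ h y := by
  let ℓ : ℝ →ᵃ[ℝ] E := AffineMap.lineMap x y
  have hderiv : HasDerivAt (h ∘ ℓ) ⟪p, y - x⟫ 0 := by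
    simpa using hp.hasFDerivAt.comp_hasDerivAt_of_eq (0 : ℝ) AffineMap.hasDerivAt_lineMap
      (AffineMap.lineMap_apply_zero x y).symm
  have := (hconv.comp_affineMap ℓ).le_slope_of_hasDerivAt (Set.mem_univ 0) (Set.mem_univ 1)
    one_pos hderiv
  simp only [slope_def_field, Function.comp_apply, ℓ, AffineMap.lineMap_apply_one,
    AffineMap.lineMap_apply_zero, sub_zero, div_one] at this
  linarith

theorem EReal.tsum_eq_iSup_sum {ι : Type*} {A : ι → EReal} (hA : ∀ i, 0 ≤ A i) :
    ∑' i, A i = ⨆ s : Finset ι, ∑ i ∈ s, A i :=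
  (hasSum_of_isLUB_of_nonneg _ hA isLUB_iSup).tsum_eq

theorem EReal.tsum_update_zero_add_le {ι : Type*} [DecidableEq ι] {A : ι → EReal}
    (hA : ∀ i, 0 ≤ A i) (k : ι) : ∑' i, Function.update A k 0 i + A k ≤ ∑' i, A i := by
  have hupd : ∀ i, 0 ≤ Function.update A k 0 i := by
    intro i; rcases eq_or_ne i k with rfl | hi <;> simp [*]
  have hk : A k ≤ ∑' i, A i := by
    rw [EReal.tsum_eq_iSup_sum hA]; exact le_iSup_of_le {k} (by simp)
  rcases eq_or_ne (A k) ⊤ with htop | htop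
  · rw [htop] at hk ⊢; simp [top_le_iff.1 hk]
  have hsub := fun a => EReal.le_sub_iff_add_le (a := a) (c := ∑' i, A i)
    (Or.inl (ne_bot_of_le_ne_bot EReal.zero_ne_bot (hA k))) (Or.inl htop)
  rw [← hsub, EReal.tsum_eq_iSup_sum hupd]
  refine iSup_le fun s => (hsub _).2 ?_
  have hs : ∑ i ∈ s, Function.update A k 0 i = ∑ i ∈ s.erase k, A i := by
    rw [← Finset.sum_erase s (Function.update_self k 0 A)]
    exact Finset.sum_congr rfl fun i hi => Function.update_of_ne (Finset.ne_of_mem_erase hi) _ _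
  rw [hs, add_comm, ← Finset.sum_insert (Finset.notMem_erase k s), EReal.tsum_eq_iSup_sum hA]
  exact le_iSup (fun t : Finset ι => ∑ i ∈ t, A i) _

theorem lp.tendsto_norm_cofinite_zero {ι : Type*} {E : ι → Type*}
    [∀ i, NormedAddCommGroup (E i)] {p : ℝ≥0∞} (hp : 0 < p.toReal) (v : lp E p) :
    Tendsto (fun i => ‖v i‖) cofinite (𝓝 0) := by
  have h := ((lp.memℓp v).summable hp).tendsto_cofinite_zero
  have hc : ContinuousAt (fun r : ℝ => r ^ p.toReal⁻¹) 0 :=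
    Real.continuousAt_rpow_const _ _ (Or.inr (inv_pos.2 hp).le)
  have := hc.tendsto.comp h
  rw [Function.comp_def, Real.zero_rpow (inv_pos.2 hp).ne'] at this
  refine this.congr fun i => ?_
  rw [← Real.rpow_mul (norm_nonneg _), mul_inv_cancel₀ hp.ne', Real.rpow_one]

theorem lp.inner_single_right_real {ι : Type*} [DecidableEq ι] (v : lp (fun _ : ι => ℝ) 2)
    (k : ι) (c : ℝ) : ⟪v, lp.single 2 k c⟫ = v k * c := by
  rw [lp.inner_single_right, Real.inner_apply]

theorem EReal.add_le_of_add_coe_le {a b : EReal} {p r s : ℝ} (ha : a ≠ ⊤) (hb : b ≠ ⊥)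
    (hbp : b + p ≤ a) (hab : a + r ≤ b + s) : p + r ≤ s := by
  induction a using EReal.rec <;> induction b using EReal.rec <;> simp_all
  norm_cast at hab hbp
  linarith

noncomputable def supportFn (I : Set ℝ) (t : ℝ) : EReal := ⨆ s ∈ I, ((s * t : ℝ) : EReal)

theorem coe_mul_abs_le_supportFn {I : Set ℝ} {ω : ℝ} (hω : 0 ≤ ω) (hI : Set.Icc (-ω) ω ⊆ I)
    (t : ℝ) : ((ω * |t| : ℝ) : EReal) ≤ supportFn I t := by
  rcases le_total 0 t with ht | ht
  · rw [abs_of_nonneg ht]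
    exact le_iSup₂_of_le ω (hI ⟨by linarith, le_rfl⟩) le_rfl
  · rw [abs_of_nonpos ht, mul_neg, ← neg_mul]
    exact le_iSup₂_of_le (-ω) (hI ⟨le_rfl, by linarith⟩) le_rfl

theorem supportFn_zero {I : Set ℝ} (hI : I.Nonempty) : supportFn I 0 = 0 := by
  simp [supportFn, biSup_const hI]

theorem abs_le_of_mem_frontier {I : Set ℝ} {ω t : ℝ} (hI : Set.Icc (-ω) ω ⊆ I)
    (ht : t ∈ frontier I) : ω ≤ |t| := by
  by_contra! hlt
  refine ht.2 (interior_mono hI ?_)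
  rw [interior_Icc]
  exact ⟨by linarith [neg_abs_le t], by linarith [le_abs_self t]⟩

local notation "ℓ²" => lp (fun _ : ℕ => ℝ) 2

section Separable

variable {φ : ℕ → ℝ → EReal} {ω : ℝ}

theorem tsum_sub_single_add_le (hω : 0 ≤ ω) (hφ0 : ∀ k, φ k 0 = 0)
    (hφ : ∀ k t, ((ω * |t| : ℝ) : EReal) ≤ φ k t) (x : ℓ²) (k : ℕ) :
    ∑' j, φ j ((x - lp.single 2 k (x k) : ℓ²) j) + ((ω * |x k| : ℝ) : EReal) ≤
      ∑' j, φ j (x j) := by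
  have hupdate : (fun j => φ j ((x - lp.single 2 k (x k) : ℓ²) j)) =
      Function.update (fun j => φ j (x j)) k 0 := by
    funext j
    rcases eq_or_ne j k with rfl | hj
    · simp [hφ0]
    · simp [hj]
  have hnonneg : ∀ j, 0 ≤ φ j (x j) := fun j =>
    le_trans (by exact_mod_cast mul_nonneg hω (abs_nonneg _)) (hφ j _)
  rw [hupdate]
  exact (add_le_add_right (hφ k _) _).trans (EReal.tsum_update_zero_add_le hnonneg k)

theorem le_add_of_subgradient_of_apply_ne_zero {K : ℝ≥0}
    {h : ℓ² → ℝ} {h' : ℓ² → ℓ²} (hω : 0 ≤ ω) (hφ0 : ∀ k, φ k 0 = 0)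
    (hφ : ∀ k t, ((ω * |t| : ℝ) : EReal) ≤ φ k t) (hconv : ConvexOn ℝ Set.univ h)
    (hgrad : ∀ x, HasGradientAt h (h' x) x) (hlip : LipschitzWith K h') {x u : ℓ²}
    (hu : ∀ y : ℓ², ∑' j, φ j (x j) + (h x : EReal) + (⟪u, y - x⟫ : EReal) ≤
      ∑' j, φ j (y j) + (h y : EReal))
    {k : ℕ} (hk : x k ≠ 0) : ω ≤ |h' x k| + K * |x k| + |u k| := by
  set c := x k
  set y : ℓ² := x - lp.single 2 k c
  have hφnonneg : ∀ j t, 0 ≤ φ j t := fun j t =>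
    le_trans (by exact_mod_cast mul_nonneg hω (abs_nonneg _)) (hφ j t)
  have hfin : ∑' j, φ j (x j) ≠ ⊤ := by
    intro htop
    simpa [htop, hφ0] using hu 0
  have hdrop : ω * |c| + (h x + ⟪u, y - x⟫) ≤ h y :=
    EReal.add_le_of_add_coe_le hfin (ne_bot_of_le_ne_bot EReal.zero_ne_bot (tsum_nonneg
      fun j => hφnonneg j _)) (tsum_sub_single_add_le hω hφ0 hφ x k)
      (by simpa only [EReal.coe_add, add_assoc] using hu y)
  have hyx : y - x = -lp.single 2 k c := by simp [y]
  have hgrad_y := hconv.add_inner_le_of_hasGradientAt (hgrad y) x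
  rw [← neg_sub, hyx, neg_neg, lp.inner_single_right_real] at hgrad_y
  rw [hyx, inner_neg_right, lp.inner_single_right_real] at hdrop
  have hlipk : |h' y k - h' x k| ≤ K * |c| := by
    calc |h' y k - h' x k| = ‖(h' y - h' x : ℓ²) k‖ := by simp
      _ ≤ ‖h' y - h' x‖ := lp.norm_apply_le_norm two_ne_zero _ k
      _ ≤ K * ‖y - x‖ := by simpa only [dist_eq_norm] using hlip.dist_le_mul y x
      _ = K * |c| := by rw [hyx, norm_neg, lp.norm_single two_pos, Real.norm_eq_abs]
  have hbound : ω * |c| ≤ (|h' x k| + K * |c| + |u k|) * |c| := by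
    calc ω * |c| ≤ (u k - h' y k) * c := by linarith
      _ ≤ |u k - h' y k| * |c| := by rw [← abs_mul]; exact le_abs_self _
      _ ≤ (|h' x k| + K * |c| + |u k|) * |c| := by
        gcongr
        obtain ⟨hlip₁, hlip₂⟩ := abs_le.1 hlipk
        rw [abs_le]
        constructor <;> linarith [le_abs_self (u k), neg_abs_le (u k), le_abs_self (h' x k),
          neg_abs_le (h' x k)]
  exact le_of_mul_le_mul_right hbound (abs_pos.2 hk)

end Separable

theorem stmt_14_general (ω L : ℝ) (hω : 0 < ω)
    (I : ℕ → Set ℝ) (hIsub : ∀ k, Set.Icc (-ω) ω ⊆ I k)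
    (ψ : ℕ → ℝ → EReal)
    (hψconv : ∀ k, ∀ s t a b : ℝ, 0 ≤ a → 0 ≤ b → a + b = 1 →
      ψ k (a * s + b * t) ≤ (a : EReal) * ψ k s + (b : EReal) * ψ k t)
    (hψ0 : ∀ k, ψ k 0 = 0)
    (hψdiff : ∀ k, ∃ (F : ℝ → ℝ) (ε : ℝ), 0 < ε ∧
      (∀ t : ℝ, |t| < ε → ψ k t = (F t : EReal)) ∧ HasDerivAt F 0 0)
    (h : lp (fun _ : ℕ => ℝ) 2 → ℝ) (h' : lp (fun _ : ℕ => ℝ) 2 → lp (fun _ : ℕ => ℝ) 2)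
    (hhconv : ConvexOn ℝ Set.univ h)
    (hhgrad : ∀ x, HasGradientAt h (h' x) x)
    (hhlip : LipschitzWith (Real.toNNReal L) h')
    (g f : lp (fun _ : ℕ => ℝ) 2 → EReal)
    (hg : ∀ x, g x = ∑' k, (ψ k (x k) + ⨆ s ∈ I k, ((s * x k : ℝ) : EReal)))
    (hf : ∀ x, f x = g x + ((h x : ℝ) : EReal))
    (x : lp (fun _ : ℕ => ℝ) 2)
    (hxdom : ∃ u : lp (fun _ : ℕ => ℝ) 2, ∀ y,
      f x + ((⟪u, y - x⟫ : ℝ) : EReal) ≤ f y) :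
    ({k : ℕ | x k ≠ 0} ∪ {k : ℕ | -(h' x k) ∈ frontier (I k)}).Finite := by
  obtain ⟨u, hu⟩ := hxdom
  set K := L.toNNReal
  have hterm0 : ∀ k, ψ k 0 + supportFn (I k) 0 = 0 := fun k => by
    rw [hψ0, supportFn_zero ⟨0, hIsub k ⟨by linarith, hω.le⟩⟩, add_zero]
  have hterm : ∀ k t, ((ω * |t| : ℝ) : EReal) ≤ ψ k t + supportFn (I k) t := fun k t =>
    (coe_mul_abs_le_supportFn hω.le (hIsub k) t).trans <| le_add_of_nonneg_left <|
      EReal.nonneg_of_convex_of_hasDerivAt_zero (hψconv k) (hψ0 k) (hψdiff k) t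
  have hsupp : ∀ k, x k ≠ 0 → ω ≤ |h' x k| + K * |x k| + |u k| := fun k =>
    le_add_of_subgradient_of_apply_ne_zero hω.le hterm0 hterm hhconv hhgrad hhlip
      (fun y => by simpa only [hf, hg, supportFn] using hu y)
  have hfrontier : ∀ k, -(h' x k) ∈ frontier (I k) → ω ≤ |h' x k| + K * |x k| + |u k| :=
    fun k hk => by
      have hgrad_k := abs_neg (h' x k) ▸ abs_le_of_mem_frontier (hIsub k) hk
      have hx_k : 0 ≤ (K : ℝ) * |x k| := by positivity
      linarith [abs_nonneg (u k)]
  have hsmall : Tendsto (fun k => |h' x k| + K * |x k| + |u k|) cofinite (𝓝 0) := by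
    have hv : ∀ v : ℓ², Tendsto (fun k => |v k|) cofinite (𝓝 0) := fun v => by
      simpa only [Real.norm_eq_abs] using lp.tendsto_norm_cofinite_zero (by norm_num) v
    simpa using ((hv (h' x)).add ((hv x).const_mul (K : ℝ))).add (hv u)
  refine (eventually_cofinite.1 (hsmall.eventually_lt_const hω)).subset ?_
  rintro k (hk | hk)
  · exact not_lt.2 (hsupp k hk)
  · exact not_lt.2 (hfrontier k hk)

/-- Hypothesis (H): `f = g + h` on `X = ℓ²(ℕ)`, with `h` convex, bounded below,
differentiable with `L`-Lipschitz gradient `h'`, and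
`g(x) = Σ_k [ψ_k(x_k) + σ_{I_k}(x_k)]`, each `I_k` a proper closed interval containing
`[−ω, ω]` (`ω > 0`), each `ψ_k` proper convex lsc with `ψ_k(0) = 0` and `ψ_k'(0) = 0`
(encoded: `ψ_k` agrees near `0` with a real function having derivative `0` at `0`).
Then for every `x ∈ dom ∂f`, the extended support
`esupp(x) = supp(x) ∪ {k : −(∇h(x))_k ∈ bd I_k}` is finite. -/
theorem stmt_14 (ω L : ℝ) (hω : 0 < ω) (hL : 0 < L)
    (I : ℕ → Set ℝ) (hIcl : ∀ k, IsClosed (I k)) (hIconn : ∀ k, (I k).OrdConnected)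
    (hIproper : ∀ k, I k ≠ Set.univ) (hIsub : ∀ k, Set.Icc (-ω) ω ⊆ I k)
    (ψ : ℕ → ℝ → EReal)
    (hψconv : ∀ k, ∀ s t a b : ℝ, 0 ≤ a → 0 ≤ b → a + b = 1 →
      ψ k (a * s + b * t) ≤ (a : EReal) * ψ k s + (b : EReal) * ψ k t)
    (hψlsc : ∀ k, LowerSemicontinuous (ψ k))
    (hψbot : ∀ k t, ψ k t ≠ ⊥)
    (hψ0 : ∀ k, ψ k 0 = 0)
    (hψdiff : ∀ k, ∃ (F : ℝ → ℝ) (ε : ℝ), 0 < ε ∧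
      (∀ t : ℝ, |t| < ε → ψ k t = (F t : EReal)) ∧ HasDerivAt F 0 0)
    (h : lp (fun _ : ℕ => ℝ) 2 → ℝ) (h' : lp (fun _ : ℕ => ℝ) 2 → lp (fun _ : ℕ => ℝ) 2)
    (hhconv : ConvexOn ℝ Set.univ h) (hhbdd : BddBelow (Set.range h))
    (hhgrad : ∀ x, HasGradientAt h (h' x) x)
    (hhlip : LipschitzWith (Real.toNNReal L) h')
    (g f : lp (fun _ : ℕ => ℝ) 2 → EReal)
    (hg : ∀ x, g x = ∑' k, (ψ k (x k) + ⨆ s ∈ I k, ((s * x k : ℝ) : EReal)))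
    (hf : ∀ x, f x = g x + ((h x : ℝ) : EReal))
    (x : lp (fun _ : ℕ => ℝ) 2)
    (hxdom : ∃ u : lp (fun _ : ℕ => ℝ) 2, ∀ y,
      f x + ((⟪u, y - x⟫ : ℝ) : EReal) ≤ f y) :
    ({k : ℕ | x k ≠ 0} ∪ {k : ℕ | -(h' x k) ∈ frontier (I k)}).Finite :=
  stmt_14_general ω L hω I hIsub ψ hψconv hψ0 hψdiff h h' hhconv hhgrad hhlip g f hg hf x hxdom
end

section
/- Under hypothesis (H) with ψ ≡ 0, if x̄ ∈ argmin f then esupp(x̄) = {k ∈ ℕ : −(∇h(x̄))_k ∈ bd I_k}; in particular esupp(x̄) does not depend on the choice of minimizer x̄, since ∇h is constant on argmin f. -/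
/-!
Write `f = Φ + h` with `Φ x = ∑ₖ σ_{I_k}(x_k)`, a convex, `[0, ∞]`-valued function. At a
minimizer `x̄`, convexity of `Φ` along the segment to any `y` and differentiability of `h` give
the subgradient inequality `Φ x̄ - Φ y ≤ ⟪∇h x̄, y - x̄⟫`.

Moving only the `k`-th coordinate to `0` and to `2 x̄_k`, and using positive homogeneity of
`σ_{I_k}`, this forces `σ_{I_k}(x̄_k) = c x̄_k` with `c = -(∇h x̄)_k`; so when `x̄_k ≠ 0`, `c` is
the supremum or the infimum of `I_k` and lies on its boundary.

For two minimizers `x̄, x̄'`, which have equal values, the inequality with `y = x̄'` gives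
`h x̄' - h x̄ ≤ ⟪∇h x̄, x̄' - x̄⟫`. Hence `x̄'`, like `x̄`, minimizes the convex function
`h - ⟪∇h x̄, ·⟫`, and so `∇h x̄' = ∇h x̄`.
-/

open scoped RealInnerProductSpace ENNReal NNReal Topology lp
open Set Filter

-- Valued in `ℝ≥0∞` so that sums over coordinates always exist; it is `σ_K` once `0 ∈ K`.
noncomputable def supportFun (K : Set ℝ) (u : ℝ) : ℝ≥0∞ := ⨆ s ∈ K, ENNReal.ofReal (s * u)

section SupportFun

variable {K : Set ℝ}

theorem coe_supportFun (h0 : (0 : ℝ) ∈ K) (u : ℝ) :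
    (supportFun K u : EReal) = ⨆ s ∈ K, ((s * u : ℝ) : EReal) := by
  have hnonneg : (0 : EReal) ≤ ⨆ s ∈ K, ((s * u : ℝ) : EReal) :=
    le_iSup₂_of_le (f := fun s _ => ((s * u : ℝ) : EReal)) 0 h0 (by simp)
  refine le_antisymm ?_ (iSup₂_le fun s hs => ?_)
  · rw [← EReal.coe_toENNReal hnonneg, EReal.coe_ennreal_le_coe_ennreal_iff]
    refine iSup₂_le fun s hs => ?_
    rw [← EReal.coe_ennreal_le_coe_ennreal_iff, EReal.coe_toENNReal hnonneg,
      EReal.coe_ennreal_ofReal]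
    exact max_le_iff.2 ⟨le_iSup₂_of_le s hs le_rfl, hnonneg⟩
  · calc ((s * u : ℝ) : EReal) ≤ (ENNReal.ofReal (s * u) : EReal) := by
          rw [EReal.coe_ennreal_ofReal]; exact EReal.coe_le_coe (le_max_left _ _)
      _ ≤ supportFun K u := EReal.coe_ennreal_le_coe_ennreal_iff.2 (le_iSup₂_of_le s hs le_rfl)

@[simp]
theorem supportFun_zero : supportFun K 0 = 0 := by
  simp [supportFun]

theorem supportFun_mul {a : ℝ} (ha : 0 ≤ a) (u : ℝ) :
    supportFun K (a * u) = ENNReal.ofReal a * supportFun K u := by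
  simp only [supportFun, ENNReal.mul_iSup, ← ENNReal.ofReal_mul ha, mul_left_comm a]

theorem convexOn_supportFun : ConvexOn ℝ≥0 univ (supportFun K) := by
  refine ⟨convex_univ, fun u _ v _ a b _ _ _ => iSup₂_le fun s hs => ?_⟩
  simp only [NNReal.smul_def, ENNReal.smul_def, smul_eq_mul]
  calc ENNReal.ofReal (s * (a * u + b * v))
      ≤ ENNReal.ofReal (a * (s * u)) + ENNReal.ofReal (b * (s * v)) :=
        le_of_eq_of_le (by ring_nf) ENNReal.ofReal_add_le
    _ = a * ENNReal.ofReal (s * u) + b * ENNReal.ofReal (s * v) := by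
        rw [ENNReal.ofReal_mul (NNReal.coe_nonneg a), ENNReal.ofReal_mul (NNReal.coe_nonneg b),
          ENNReal.ofReal_coe_nnreal, ENNReal.ofReal_coe_nnreal]
    _ ≤ a * supportFun K u + b * supportFun K v := by
        gcongr <;> exact le_iSup₂_of_le s hs le_rfl

theorem mul_le_of_supportFun_eq {t c s : ℝ} (hs : s ∈ K) (hc : 0 ≤ c * t)
    (h : supportFun K t = ENNReal.ofReal (c * t)) : s * t ≤ c * t := by
  rw [← ENNReal.ofReal_le_ofReal_iff hc, ← h]
  exact le_iSup₂_of_le s hs le_rfl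

theorem mul_le_of_supportFun_eq_of_forall_mul_le {t c b : ℝ} (h0 : (0 : ℝ) ∈ K)
    (hb : ∀ s ∈ K, s * t ≤ b * t) (h : supportFun K t = ENNReal.ofReal (c * t)) :
    c * t ≤ b * t := by
  have hbt : 0 ≤ b * t := by simpa using hb 0 h0
  rw [← ENNReal.ofReal_le_ofReal_iff hbt, ← h]
  exact iSup₂_le fun s hs => ENNReal.ofReal_le_ofReal (hb s hs)

theorem IsLUB.mem_frontier {α : Type*} [TopologicalSpace α] [LinearOrder α] [OrderTopology α]
    [DenselyOrdered α] [NoMaxOrder α] {s : Set α} {a : α} (ha : IsLUB s a) (hs : s.Nonempty) :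
    a ∈ frontier s :=
  ⟨ha.mem_closure hs, fun hint => by
    have : a ∈ interior (Iic a) := interior_mono (fun _ hx => ha.1 hx) hint
    simp at this⟩

theorem IsGLB.mem_frontier {α : Type*} [TopologicalSpace α] [LinearOrder α] [OrderTopology α]
    [DenselyOrdered α] [NoMinOrder α] {s : Set α} {a : α} (ha : IsGLB s a) (hs : s.Nonempty) :
    a ∈ frontier s :=
  IsLUB.mem_frontier (α := αᵒᵈ) ha hs

theorem mem_frontier_of_supportFun_eq {t c : ℝ} (h0 : (0 : ℝ) ∈ K) (ht : t ≠ 0)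
    (hfin : supportFun K t ≠ ⊤) (h : (supportFun K t).toReal = c * t) : c ∈ frontier K := by
  have hct : 0 ≤ c * t := h ▸ ENNReal.toReal_nonneg
  have heq : supportFun K t = ENNReal.ofReal (c * t) := by rw [← h, ENNReal.ofReal_toReal hfin]
  have hup s (hs : s ∈ K) := mul_le_of_supportFun_eq hs hct heq
  have hleast b (hb : ∀ s ∈ K, s * t ≤ b * t) := mul_le_of_supportFun_eq_of_forall_mul_le h0 hb heq
  rcases ht.lt_or_gt with htneg | htpos
  · refine IsGLB.mem_frontier ⟨fun s hs => ?_, fun b hb => ?_⟩ ⟨0, h0⟩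
    · exact (mul_le_mul_right_of_neg htneg).1 (hup s hs)
    · exact (mul_le_mul_right_of_neg htneg).1
        (hleast b fun s hs => mul_le_mul_of_nonpos_right (hb hs) htneg.le)
  · refine IsLUB.mem_frontier ⟨fun s hs => ?_, fun b hb => ?_⟩ ⟨0, h0⟩
    · exact le_of_mul_le_mul_right (hup s hs) htpos
    · exact le_of_mul_le_mul_right
        (hleast b fun s hs => mul_le_mul_of_nonneg_right (hb hs) htpos.le) htpos

end SupportFun

theorem EReal.coe_ennreal_tsum {ι : Type*} (a : ι → ℝ≥0∞) :
    ((∑' i, a i : ℝ≥0∞) : EReal) = ∑' i, (a i : EReal) :=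
  ENNReal.summable.map_tsum
    (⟨⟨(↑), EReal.coe_ennreal_zero⟩, EReal.coe_ennreal_add⟩ : ℝ≥0∞ →+ EReal)
    continuous_coe_ennreal_ereal

theorem ENNReal.toReal_add_le_of_coe_add_le {a b : ℝ≥0∞} {r s : ℝ}
    (h : (a : EReal) + r ≤ b + s) (hb : b ≠ ⊤) : a ≠ ⊤ ∧ a.toReal + r ≤ b.toReal + s := by
  rw [← EReal.coe_ennreal_toReal hb, ← EReal.coe_add] at h
  have ha : a ≠ ⊤ := by
    rintro rfl
    rw [EReal.coe_ennreal_top, EReal.top_add_coe, top_le_iff] at h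
    exact EReal.coe_ne_top _ h
  rw [← EReal.coe_ennreal_toReal ha, ← EReal.coe_add] at h
  exact ⟨ha, EReal.coe_le_coe_iff.1 h⟩

theorem ENNReal.tsum_add_apply_eq_of_forall_ne {β : Type*} {F G : β → ℝ≥0∞} {k : β}
    (hFG : ∀ j ≠ k, F j = G j) : (∑' j, F j) + G k = (∑' j, G j) + F k := by
  classical
  have hrest : (∑' j, if j = k then 0 else F j) = ∑' j, if j = k then 0 else G j :=
    tsum_congr fun j => by split_ifs with hj <;> simp [hFG j, hj]
  rw [ENNReal.tsum_eq_add_tsum_ite k, ENNReal.tsum_eq_add_tsum_ite (f := G) k, hrest]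
  ring

theorem le_of_hasDerivAt_of_forall_mul_le {g : ℝ → ℝ} {D b : ℝ} (hg : HasDerivAt g D 0)
    (hb : ∀ θ : ℝ, 0 < θ → θ < 1 → θ * b ≤ g θ - g 0) : b ≤ D := by
  have hslope : Tendsto (slope g 0) (𝓝[>] 0) (𝓝 D) :=
    (hasDerivAt_iff_tendsto_slope.1 hg).mono_left (nhdsWithin_mono _ fun _ hx => ne_of_gt hx)
  refine ge_of_tendsto hslope ?_
  filter_upwards [Ioo_mem_nhdsGT (zero_lt_one' ℝ)] with θ ⟨hθ0, hθ1⟩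
  rw [slope_def_field, sub_zero, le_div_iff₀ hθ0, mul_comm]
  exact hb θ hθ0 hθ1

theorem ConvexOn.toReal_sub_le_of_forall_le {E : Type*} [AddCommGroup E] [Module ℝ E]
    {Φ : E → ℝ≥0∞} {h : E → ℝ} {x y : E} {D : ℝ}
    (hΦ : ConvexOn ℝ≥0 univ Φ) (hmin : ∀ z, (Φ x : EReal) + h x ≤ Φ z + h z) (hy : Φ y ≠ ⊤)
    (hD : HasDerivAt (fun θ : ℝ => h (x + θ • (y - x))) D 0) :
    (Φ x).toReal - (Φ y).toReal ≤ D := by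
  have hx : Φ x ≠ ⊤ := (ENNReal.toReal_add_le_of_coe_add_le (hmin y) hy).1
  refine le_of_hasDerivAt_of_forall_mul_le hD fun θ hθ0 hθ1 => ?_
  set z := x + θ • (y - x)
  have hconv : Φ z ≤ ENNReal.ofReal (1 - θ) * Φ x + ENNReal.ofReal θ * Φ y := by
    have hz : z = (1 - θ).toNNReal • x + θ.toNNReal • y := by
      rw [NNReal.smul_def, NNReal.smul_def, Real.coe_toNNReal _ hθ0.le,
        Real.coe_toNNReal _ (by linarith)]
      module
    have hsum : (1 - θ).toNNReal + θ.toNNReal = 1 := by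
      rw [← Real.toNNReal_add (by linarith) hθ0.le, sub_add_cancel, Real.toNNReal_one]
    simpa [hz, ENNReal.smul_def, ENNReal.ofReal] using
      hΦ.2 (mem_univ x) (mem_univ y) zero_le zero_le hsum
  have hrhs : ENNReal.ofReal (1 - θ) * Φ x + ENNReal.ofReal θ * Φ y ≠ ⊤ := by
    finiteness
  have hzle : (Φ z).toReal ≤ (1 - θ) * (Φ x).toReal + θ * (Φ y).toReal := by
    have := ENNReal.toReal_mono hrhs hconv
    rwa [ENNReal.toReal_add (by finiteness) (by finiteness), ENNReal.toReal_mul,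
      ENNReal.toReal_mul, ENNReal.toReal_ofReal (by linarith),
      ENNReal.toReal_ofReal hθ0.le] at this
  have hmz := (ENNReal.toReal_add_le_of_coe_add_le (hmin z) (ne_top_of_le_ne_top hrhs hconv)).2
  simp only [zero_smul, add_zero]
  nlinarith

section Gradient

variable {F : Type*} [NormedAddCommGroup F] [InnerProductSpace ℝ F] [CompleteSpace F]
  {h : F → ℝ} {g x : F}

theorem HasGradientAt.hasDerivAt_add_smul (hg : HasGradientAt h g x) (v : F) :
    HasDerivAt (fun θ : ℝ => h (x + θ • v)) ⟪g, v⟫ 0 := by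
  have hline : HasDerivAt (fun θ : ℝ => x + θ • v) v 0 := by
    simpa using ((hasDerivAt_id (0 : ℝ)).smul_const v).const_add x
  have hfd : HasFDerivAt h (InnerProductSpace.toDual ℝ F g) (x + (0 : ℝ) • v) := by
    simpa using hg.hasFDerivAt
  simpa [Function.comp_def] using hfd.comp_hasDerivAt 0 hline

theorem ConvexOn.inner_le_sub_of_hasGradientAt (hh : ConvexOn ℝ univ h)
    (hg : HasGradientAt h g x) (y : F) : ⟪g, y - x⟫ ≤ h y - h x := by
  have hline : ConvexOn ℝ univ (h ∘ AffineMap.lineMap x y) := hh.comp_affineMap _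
  have hcomp : h ∘ AffineMap.lineMap x y = fun θ : ℝ => h (x + θ • (y - x)) := by
    ext θ
    simp [AffineMap.lineMap_apply, add_comm]
  rw [hcomp] at hline
  simpa [slope_def_field] using hline.le_slope_of_hasDerivAt (mem_univ 0) (mem_univ 1)
    zero_lt_one (hg.hasDerivAt_add_smul (y - x))

theorem ConvexOn.gradient_eq_of_sub_le_inner {h' : F → F} {y : F} (hh : ConvexOn ℝ univ h)
    (hgrad : ∀ x, HasGradientAt h (h' x) x) (hxy : h y - h x ≤ ⟪h' x, y - x⟫) :
    h' y = h' x := by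
  set v := h' y - h' x
  have hmin : IsLocalMin (fun θ : ℝ => h (y + θ • v) - (⟪h' x, y⟫ + θ * ⟪h' x, v⟫)) 0 := by
    refine Eventually.of_forall fun θ => ?_
    have := hh.inner_le_sub_of_hasGradientAt (hgrad x) (y + θ • v)
    simp only [zero_smul, add_zero, zero_mul, inner_sub_right, inner_add_right,
      real_inner_smul_right] at this hxy ⊢
    linarith
  have hD : HasDerivAt (fun θ : ℝ => h (y + θ • v) - (⟪h' x, y⟫ + θ * ⟪h' x, v⟫))
      (⟪h' y, v⟫ - ⟪h' x, v⟫) 0 :=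
    ((hgrad y).hasDerivAt_add_smul v).sub
      (((hasDerivAt_id (0 : ℝ)).mul_const _).const_add _ |>.congr_deriv (by simp))
  have hvv : ⟪v, v⟫ = 0 := by rw [← hmin.hasDerivAt_eq_zero hD, ← inner_sub_left]
  rw [← sub_eq_zero]
  exact inner_self_eq_zero.1 hvv

theorem ConvexOn.gradient_eq_of_forall_le {Φ : F → ℝ≥0∞} {h' : F → F} {x y z₀ : F}
    (hΦ : ConvexOn ℝ≥0 univ Φ) (hh : ConvexOn ℝ univ h) (hgrad : ∀ x, HasGradientAt h (h' x) x)
    (hz₀ : Φ z₀ ≠ ⊤) (hx : ∀ z, (Φ x : EReal) + h x ≤ Φ z + h z)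
    (hy : ∀ z, (Φ y : EReal) + h y ≤ Φ z + h z) : h' y = h' x := by
  have hxfin := (ENNReal.toReal_add_le_of_coe_add_le (hx z₀) hz₀).1
  have hyfin := (ENNReal.toReal_add_le_of_coe_add_le (hy z₀) hz₀).1
  have hyx := (ENNReal.toReal_add_le_of_coe_add_le (hy x) hxfin).2
  have hsub := hΦ.toReal_sub_le_of_forall_le hx hyfin ((hgrad x).hasDerivAt_add_smul (y - x))
  exact hh.gradient_eq_of_sub_le_inner hgrad (by linarith)

end Gradient

noncomputable def sumSupportFun (I : ℕ → Set ℝ) (x : ℓ²(ℕ, ℝ)) : ℝ≥0∞ :=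
  ∑' k, supportFun (I k) (x k)

section SumSupportFun

variable {I : ℕ → Set ℝ}

theorem coe_sumSupportFun (h0 : ∀ k, (0 : ℝ) ∈ I k) (x : ℓ²(ℕ, ℝ)) :
    (sumSupportFun I x : EReal) = ∑' k, ⨆ s ∈ I k, ((s * x k : ℝ) : EReal) := by
  simp only [sumSupportFun, EReal.coe_ennreal_tsum, coe_supportFun (h0 _)]

@[simp]
theorem sumSupportFun_zero : sumSupportFun I 0 = 0 := by
  simp [sumSupportFun]

theorem convexOn_sumSupportFun : ConvexOn ℝ≥0 univ (sumSupportFun I) := by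
  refine ⟨convex_univ, fun x _ y _ a b ha hb hab => ?_⟩
  simp only [sumSupportFun, ENNReal.smul_def, smul_eq_mul, ← ENNReal.tsum_mul_left,
    ← ENNReal.tsum_add]
  refine ENNReal.tsum_le_tsum fun k => ?_
  have hk : (a • x + b • y) k = a • x k + b • y k := by
    simp only [NNReal.smul_def, lp.coeFn_add, lp.coeFn_smul, Pi.add_apply, Pi.smul_apply]
  rw [hk]
  exact convexOn_supportFun.2 (mem_univ (x k)) (mem_univ (y k)) ha hb hab

theorem sumSupportFun_add_single (x : ℓ²(ℕ, ℝ)) (k : ℕ) (τ : ℝ) :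
    sumSupportFun I (x + lp.single 2 k τ) + supportFun (I k) (x k) =
      sumSupportFun I x + supportFun (I k) (x k + τ) := by
  have := ENNReal.tsum_add_apply_eq_of_forall_ne (k := k)
    (F := fun j => supportFun (I j) ((x + lp.single 2 k τ : ℓ²(ℕ, ℝ)) j))
    (G := fun j => supportFun (I j) (x j)) fun j hj => by simp [lp.single_apply, hj]
  simpa [sumSupportFun, lp.single_apply] using this

theorem sumSupportFun_ne_top_of_forall_le {h : ℓ²(ℕ, ℝ) → ℝ} {x : ℓ²(ℕ, ℝ)}
    (hmin : ∀ z, (sumSupportFun I x : EReal) + h x ≤ sumSupportFun I z + h z) :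
    sumSupportFun I x ≠ ⊤ :=
  (ENNReal.toReal_add_le_of_coe_add_le (hmin 0) (by simp)).1

variable {h : ℓ²(ℕ, ℝ) → ℝ} {g x : ℓ²(ℕ, ℝ)}

theorem toReal_supportFun_sub_le_of_forall_le
    (hmin : ∀ z, (sumSupportFun I x : EReal) + h x ≤ sumSupportFun I z + h z)
    (hg : HasGradientAt h g x) (k : ℕ) {τ : ℝ} (hτ : supportFun (I k) (x k + τ) ≠ ⊤) :
    (supportFun (I k) (x k)).toReal - (supportFun (I k) (x k + τ)).toReal ≤ g k * τ := by
  set y := x + lp.single 2 k τ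
  have hx := sumSupportFun_ne_top_of_forall_le hmin
  have hxk : supportFun (I k) (x k) ≠ ⊤ := ne_top_of_le_ne_top hx (ENNReal.le_tsum k)
  have hsplit := sumSupportFun_add_single (I := I) x k τ
  have hy : sumSupportFun I y ≠ ⊤ :=
    ne_top_of_le_ne_top (by finiteness) (le_self_add.trans_eq hsplit)
  have hsplit' : (sumSupportFun I y).toReal + (supportFun (I k) (x k)).toReal =
      (sumSupportFun I x).toReal + (supportFun (I k) (x k + τ)).toReal := by
    rw [← ENNReal.toReal_add hy hxk, hsplit, ENNReal.toReal_add hx hτ]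
  have hD : HasDerivAt (fun θ : ℝ => h (x + θ • (y - x))) (g k * τ) 0 := by
    simpa [y, lp.inner_single_right, mul_comm] using hg.hasDerivAt_add_smul (lp.single 2 k τ)
  have := convexOn_sumSupportFun.toReal_sub_le_of_forall_le hmin hy hD
  linarith

theorem toReal_supportFun_eq_of_forall_le
    (hmin : ∀ z, (sumSupportFun I x : EReal) + h x ≤ sumSupportFun I z + h z)
    (hg : HasGradientAt h g x) (k : ℕ) :
    supportFun (I k) (x k) ≠ ⊤ ∧ (supportFun (I k) (x k)).toReal = -g k * x k := by
  have hxk : supportFun (I k) (x k) ≠ ⊤ :=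
    ne_top_of_le_ne_top (sumSupportFun_ne_top_of_forall_le hmin) (ENNReal.le_tsum k)
  have hdouble : supportFun (I k) (x k + x k) = ENNReal.ofReal 2 * supportFun (I k) (x k) := by
    rw [← two_mul, supportFun_mul zero_le_two]
  have hshrink := toReal_supportFun_sub_le_of_forall_le hmin hg k (τ := -x k) (by simp)
  have hgrow := toReal_supportFun_sub_le_of_forall_le hmin hg k (τ := x k)
    (by rw [hdouble]; finiteness)
  rw [add_neg_cancel, supportFun_zero, ENNReal.toReal_zero] at hshrink
  rw [hdouble, ENNReal.toReal_mul, ENNReal.toReal_ofReal zero_le_two] at hgrow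
  exact ⟨hxk, by linarith⟩

theorem neg_gradient_mem_frontier_of_forall_le (h0 : ∀ k, (0 : ℝ) ∈ I k)
    (hmin : ∀ z, (sumSupportFun I x : EReal) + h x ≤ sumSupportFun I z + h z)
    (hg : HasGradientAt h g x) {k : ℕ} (hk : x k ≠ 0) : -g k ∈ frontier (I k) :=
  have ⟨hfin, heq⟩ := toReal_supportFun_eq_of_forall_le hmin hg k
  mem_frontier_of_supportFun_eq (h0 k) hk hfin heq

end SumSupportFun

theorem stmt_16_general (ω : ℝ) (hω : 0 < ω)
    (I : ℕ → Set ℝ) (hIsub : ∀ k, Set.Icc (-ω) ω ⊆ I k)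
    (h : lp (fun _ : ℕ => ℝ) 2 → ℝ) (h' : lp (fun _ : ℕ => ℝ) 2 → lp (fun _ : ℕ => ℝ) 2)
    (hhconv : ConvexOn ℝ Set.univ h)
    (hhgrad : ∀ x, HasGradientAt h (h' x) x)
    (f : lp (fun _ : ℕ => ℝ) 2 → EReal)
    (hf : ∀ x, f x = (∑' k, ⨆ s ∈ I k, ((s * x k : ℝ) : EReal)) + ((h x : ℝ) : EReal)) :
    (∀ xbar : lp (fun _ : ℕ => ℝ) 2, (∀ y, f xbar ≤ f y) →
      {k : ℕ | xbar k ≠ 0} ∪ {k : ℕ | -(h' xbar k) ∈ frontier (I k)}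
        = {k : ℕ | -(h' xbar k) ∈ frontier (I k)})
    ∧ (∀ xbar xbar' : lp (fun _ : ℕ => ℝ) 2, (∀ y, f xbar ≤ f y) → (∀ y, f xbar' ≤ f y) →
      {k : ℕ | xbar k ≠ 0} ∪ {k : ℕ | -(h' xbar k) ∈ frontier (I k)}
        = {k : ℕ | xbar' k ≠ 0} ∪ {k : ℕ | -(h' xbar' k) ∈ frontier (I k)}) := by
  have h0 k : (0 : ℝ) ∈ I k := hIsub k ⟨by linarith, hω.le⟩
  have hf' x : f x = (sumSupportFun I x : EReal) + h x := by rw [hf, coe_sumSupportFun h0]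
  simp only [hf']
  have hesupp xbar
      (hmin : ∀ y, (sumSupportFun I xbar : EReal) + h xbar ≤ sumSupportFun I y + h y) :
      {k : ℕ | xbar k ≠ 0} ∪ {k : ℕ | -(h' xbar k) ∈ frontier (I k)}
        = {k : ℕ | -(h' xbar k) ∈ frontier (I k)} :=
    union_eq_self_of_subset_left fun _ hk =>
      neg_gradient_mem_frontier_of_forall_le h0 hmin (hhgrad xbar) hk
  refine ⟨hesupp, fun xbar xbar' hmin hmin' => ?_⟩
  rw [hesupp xbar hmin, hesupp xbar' hmin', convexOn_sumSupportFun.gradient_eq_of_forall_le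
    hhconv hhgrad (z₀ := 0) (by simp) hmin' hmin]

/-- Hypothesis (H) with `ψ ≡ 0`: `f(x) = Σ_k σ_{I_k}(x_k) + h(x)` on `ℓ²(ℕ)`, with `h`
convex, bounded below, differentiable with `L`-Lipschitz gradient `h'`, and each `I_k` a
proper closed interval containing `[−ω, ω]`, `ω > 0`.  If `x̄ ∈ argmin f` then
`esupp(x̄) = supp(x̄) ∪ {k : −(∇h(x̄))_k ∈ bd I_k} = {k : −(∇h(x̄))_k ∈ bd I_k}`;
in particular `esupp` does not depend on the choice of the minimizer. -/
theorem stmt_16 (ω L : ℝ) (hω : 0 < ω) (hL : 0 < L)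
    (I : ℕ → Set ℝ) (hIcl : ∀ k, IsClosed (I k)) (hIconn : ∀ k, (I k).OrdConnected)
    (hIproper : ∀ k, I k ≠ Set.univ) (hIsub : ∀ k, Set.Icc (-ω) ω ⊆ I k)
    (h : lp (fun _ : ℕ => ℝ) 2 → ℝ) (h' : lp (fun _ : ℕ => ℝ) 2 → lp (fun _ : ℕ => ℝ) 2)
    (hhconv : ConvexOn ℝ Set.univ h) (hhbdd : BddBelow (Set.range h))
    (hhgrad : ∀ x, HasGradientAt h (h' x) x)
    (hhlip : LipschitzWith (Real.toNNReal L) h')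
    (f : lp (fun _ : ℕ => ℝ) 2 → EReal)
    (hf : ∀ x, f x = (∑' k, ⨆ s ∈ I k, ((s * x k : ℝ) : EReal)) + ((h x : ℝ) : EReal)) :
    (∀ xbar : lp (fun _ : ℕ => ℝ) 2, (∀ y, f xbar ≤ f y) →
      {k : ℕ | xbar k ≠ 0} ∪ {k : ℕ | -(h' xbar k) ∈ frontier (I k)}
        = {k : ℕ | -(h' xbar k) ∈ frontier (I k)})
    ∧ (∀ xbar xbar' : lp (fun _ : ℕ => ℝ) 2, (∀ y, f xbar ≤ f y) → (∀ y, f xbar' ≤ f y) →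
      {k : ℕ | xbar k ≠ 0} ∪ {k : ℕ | -(h' xbar k) ∈ frontier (I k)}
        = {k : ℕ | xbar' k ≠ 0} ∪ {k : ℕ | -(h' xbar' k) ∈ frontier (I k)}) :=
  stmt_16_general ω hω I hIsub h h' hhconv hhgrad f hf
end
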